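/- Let a ∈ ℝ^n, let p ∈ [1,∞] and q ∈ [1,∞] with 1/p + 1/q = 1, and assume the residue ρ(a) belongs to L^p(Ω,μ) and K_q(Γ) < ∞. Then E‖β − a‖₂ ≤ √n · m · √(K_q(Γ)) · ‖ρ(a)‖_{L^p(Ω)}. -/

import Mathlib

open MeasureTheory ProbabilityTheory ENNReal Matrix Filter

noncomputable section

/-- The smallest eigenvalue `s₁(A)` of the symmetric positive semidefinite matrix `AᵀA`. -/
def s1 {m n : ℕ} (A : Matrix (Fin m) (Fin n) ℝ) : ℝ :=
  ⨅ i, (show (Aᵀ * A).IsHermitian by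
    simpa [Matrix.conjTranspose_eq_transpose_of_trivial] using
      Matrix.isHermitian_conjTranspose_mul_self A).eigenvalues i

/-- Euclidean norm on `ℝ^n`. -/
def enorm2 {n : ℕ} (v : Fin n → ℝ) : ℝ := Real.sqrt (∑ j, v j ^ 2)

/-- The matrix `Γ(x)` with entries `Γ(x)_{ij} = γ_j(x⁽ⁱ⁾)`. -/
def dmat {Ω : Type*} {n m : ℕ} (γ : Fin n → Ω → ℝ) (x : Fin m → Ω) :
    Matrix (Fin m) (Fin n) ℝ := Matrix.of fun i j => γ j (x i)

/-- The matrix `R(x) = (Γ(x)ᵀΓ(x))⁻¹Γ(x)ᵀ`. -/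
def Rmat {Ω : Type*} {n m : ℕ} (γ : Fin n → Ω → ℝ) (x : Fin m → Ω) :
    Matrix (Fin n) (Fin m) ℝ := ((dmat γ x)ᵀ * dmat γ x)⁻¹ * (dmat γ x)ᵀ

/-- `β(x) = R(x) F(x)` where `F(x)_i = f(x⁽ⁱ⁾)`. -/
def betaFn {Ω : Type*} {n m : ℕ} (γ : Fin n → Ω → ℝ) (f : Ω → ℝ) (x : Fin m → Ω) :
    Fin n → ℝ := Rmat γ x *ᵥ fun i => f (x i)

/-- The residue `ρ(a)(ω) = f(ω) - ∑ j a_j γ_j(ω)`. -/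
def resid {Ω : Type*} {n : ℕ} (γ : Fin n → Ω → ℝ) (f : Ω → ℝ) (a : Fin n → ℝ) : Ω → ℝ :=
  fun ω => f ω - ∑ j, a j * γ j ω

/-! On the event that `Γ(X)ᵀΓ(X)` is invertible, `RΓ = 1` gives `β - a = R ρ⃗` with
`ρ⃗ᵢ = ρ(a)(X⁽ⁱ⁾)`. For `w = R ρ⃗` the normal equations make `ρ⃗ - Γw` orthogonal to `Γw`, so
`s₁ ‖w‖² ≤ ‖Γw‖² ≤ ‖ρ⃗‖² ≤ (∑ᵢ |ρ⃗ᵢ|)²`, i.e. `‖β - a‖₂ ≤ ∑ᵢ s₁^{-1/2} |ρ(a)(X⁽ⁱ⁾)|`.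
Hölder's inequality in each summand, with `X⁽ⁱ⁾ ∼ μ`, bounds the expectation of the `i`-th
summand by `‖s₁^{-1/2}‖_{L^q} ‖ρ(a)‖_{L^p} = √(K_q(Γ)) ‖ρ(a)‖_{L^p}`. Measurability of `s₁`
comes from its continuity: it is the minimum of `‖Aw‖²` over the compact unit sphere. -/

namespace Matrix.IsHermitian

variable {ι : Type*} [Fintype ι] [DecidableEq ι] {M : Matrix ι ι ℝ}

theorem iInf_eigenvalues_mul_dotProduct_self_le (hM : M.IsHermitian) (w : ι → ℝ) :
    (⨅ i, hM.eigenvalues i) * (w ⬝ᵥ w) ≤ w ⬝ᵥ (M *ᵥ w) := by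
  set V : Matrix ι ι ℝ := (hM.eigenvectorUnitary : Matrix ι ι ℝ)
  set c : ι → ℝ := star V *ᵥ w
  have hVc : V *ᵥ c = w := by
    rw [mulVec_mulVec, Unitary.mul_star_self_of_mem hM.eigenvectorUnitary.2, one_mulVec]
  have hcoord : ∀ y, w ⬝ᵥ (V *ᵥ y) = c ⬝ᵥ y := fun y => by
    rw [dotProduct_mulVec, ← mulVec_transpose]
    simp only [c, star_eq_conjTranspose, conjTranspose_eq_transpose_of_trivial]
  have hquad : w ⬝ᵥ (M *ᵥ w) = ∑ i, hM.eigenvalues i * (c i * c i) := by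
    conv_lhs => rw [hM.spectral_theorem]
    rw [Unitary.conjStarAlgAut_apply, ← mulVec_mulVec, ← mulVec_mulVec, hcoord]
    simp [c, V, dotProduct, mulVec_diagonal, mul_left_comm]
  have hnorm : w ⬝ᵥ w = ∑ i, c i * c i := by
    conv_lhs => arg 2; rw [← hVc]
    rw [hcoord]; rfl
  rw [hquad, hnorm, Finset.mul_sum]
  exact Finset.sum_le_sum fun i _ =>
    mul_le_mul_of_nonneg_right (ciInf_le (Finite.bddBelow_range _) i) (mul_self_nonneg _)

theorem exists_dotProduct_mulVec_eq_iInf_eigenvalues [Nonempty ι] (hM : M.IsHermitian) :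
    ∃ w : ι → ℝ, w ⬝ᵥ w = 1 ∧ w ⬝ᵥ (M *ᵥ w) = ⨅ i, hM.eigenvalues i := by
  obtain ⟨i, hi⟩ := exists_eq_ciInf_of_finite (f := hM.eigenvalues)
  have hunit : (hM.eigenvectorBasis i : ι → ℝ) ⬝ᵥ hM.eigenvectorBasis i = 1 := by
    have h : inner ℝ (hM.eigenvectorBasis i) (hM.eigenvectorBasis i) = 1 := by
      rw [real_inner_self_eq_norm_sq, hM.eigenvectorBasis.orthonormal.1 i, one_pow]
    rwa [EuclideanSpace.inner_eq_star_dotProduct, star_trivial, dotProduct_comm] at h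
  refine ⟨hM.eigenvectorBasis i, hunit, ?_⟩
  rw [hM.mulVec_eigenvectorBasis, dotProduct_smul, hunit, hi]
  simp

end Matrix.IsHermitian

theorem Matrix.isHermitian_transpose_mul_self {m n : Type*} [Fintype m] (A : Matrix m n ℝ) :
    (Aᵀ * A).IsHermitian :=
  isHermitian_conjTranspose_mul_self A

theorem Matrix.posSemidef_transpose_mul_self {m n : Type*} [Fintype m] [Finite n]
    (A : Matrix m n ℝ) : (Aᵀ * A).PosSemidef :=
  posSemidef_conjTranspose_mul_self A

theorem Matrix.dotProduct_transpose_mul_self_mulVec {m n : Type*} [Fintype m] [Fintype n]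
    (A : Matrix m n ℝ) (w : n → ℝ) : w ⬝ᵥ ((Aᵀ * A) *ᵥ w) = (A *ᵥ w) ⬝ᵥ (A *ᵥ w) := by
  rw [← mulVec_mulVec, dotProduct_mulVec, vecMul_transpose]

theorem Matrix.dotProduct_self_mulVec_inv_mul_transpose_mulVec_le {m n : Type*} [Fintype m]
    [Fintype n] [DecidableEq n] {A : Matrix m n ℝ} (hA : IsUnit (Aᵀ * A).det) (v : m → ℝ) :
    (A *ᵥ (((Aᵀ * A)⁻¹ * Aᵀ) *ᵥ v)) ⬝ᵥ (A *ᵥ (((Aᵀ * A)⁻¹ * Aᵀ) *ᵥ v)) ≤ v ⬝ᵥ v := by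
  set u := A *ᵥ (((Aᵀ * A)⁻¹ * Aᵀ) *ᵥ v)
  have hnormal : Aᵀ *ᵥ (v - u) = 0 := by
    rw [mulVec_sub, mulVec_mulVec, mulVec_mulVec, ← Matrix.mul_assoc, mul_nonsing_inv _ hA,
      Matrix.one_mul, sub_self]
  have horth : (v - u) ⬝ᵥ u = 0 := by
    rw [dotProduct_mulVec, ← mulVec_transpose, hnormal, zero_dotProduct]
  have hr : 0 ≤ (v - u) ⬝ᵥ (v - u) := Fintype.sum_nonneg fun i => mul_self_nonneg _
  have hpyth : v ⬝ᵥ v = (v - u) ⬝ᵥ (v - u) + 2 * ((v - u) ⬝ᵥ u) + u ⬝ᵥ u := by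
    conv_lhs => rw [← sub_add_cancel v u]
    rw [add_dotProduct, dotProduct_add, dotProduct_add, dotProduct_comm u (v - u)]
    ring
  rw [hpyth, horth]
  linarith

theorem isCompact_setOf_dotProduct_self_eq_one {ι : Type*} [Fintype ι] :
    IsCompact {w : ι → ℝ | w ⬝ᵥ w = 1} := by
  refine Metric.isCompact_of_isClosed_isBounded
    (isClosed_eq (continuous_id.dotProduct continuous_id) continuous_const)
    ((Metric.isBounded_closedBall (x := 0) (r := 1)).subset fun w hw => ?_)
  rw [mem_closedBall_zero_iff, pi_norm_le_iff_of_nonneg zero_le_one]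
  intro i
  rw [Real.norm_eq_abs, abs_le_one_iff_mul_self_le_one, ← show w ⬝ᵥ w = 1 from hw]
  exact Finset.single_le_sum (fun j _ => mul_self_nonneg (w j)) (Finset.mem_univ i)

theorem enorm2_eq_sqrt_dotProduct {k : ℕ} (v : Fin k → ℝ) : enorm2 v = √(v ⬝ᵥ v) := by
  simp [enorm2, dotProduct, sq]

theorem enorm2_le_sum_abs {k : ℕ} (v : Fin k → ℝ) : enorm2 v ≤ ∑ i, |v i| := by
  rw [enorm2, Real.sqrt_le_iff]
  refine ⟨Finset.sum_nonneg fun i _ => abs_nonneg _, ?_⟩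
  simpa only [sq_abs] using Finset.sum_sq_le_sq_sum_of_nonneg fun i _ => abs_nonneg (v i)

section SmallestEigenvalue

variable {m n : ℕ}

theorem s1_nonneg (A : Matrix (Fin m) (Fin n) ℝ) : 0 ≤ s1 A :=
  Real.iInf_nonneg A.posSemidef_transpose_mul_self.eigenvalues_nonneg

theorem s1_mul_dotProduct_self_le (A : Matrix (Fin m) (Fin n) ℝ) (w : Fin n → ℝ) :
    s1 A * (w ⬝ᵥ w) ≤ (A *ᵥ w) ⬝ᵥ (A *ᵥ w) :=
  A.dotProduct_transpose_mul_self_mulVec w ▸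
    A.isHermitian_transpose_mul_self.iInf_eigenvalues_mul_dotProduct_self_le w

variable [Nonempty (Fin n)]

theorem s1_pos {A : Matrix (Fin m) (Fin n) ℝ} (hA : IsUnit (Aᵀ * A).det) : 0 < s1 A := by
  obtain ⟨i, hi⟩ := exists_eq_ciInf_of_finite (f := A.isHermitian_transpose_mul_self.eigenvalues)
  rw [s1, ← hi]
  exact (A.posSemidef_transpose_mul_self.posDef_iff_det_ne_zero.mpr hA.ne_zero).eigenvalues_pos i

theorem isLeast_s1 (A : Matrix (Fin m) (Fin n) ℝ) :
    IsLeast ((fun w => (A *ᵥ w) ⬝ᵥ (A *ᵥ w)) '' {w | w ⬝ᵥ w = 1}) (s1 A) := by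
  refine ⟨?_, ?_⟩
  · obtain ⟨w, hw, hmin⟩ :=
      A.isHermitian_transpose_mul_self.exists_dotProduct_mulVec_eq_iInf_eigenvalues
    exact ⟨w, hw, (A.dotProduct_transpose_mul_self_mulVec w).symm.trans hmin⟩
  · rintro _ ⟨w, hw, rfl⟩
    simpa [show w ⬝ᵥ w = 1 from hw] using s1_mul_dotProduct_self_le A w

theorem continuous_s1 : Continuous (s1 : Matrix (Fin m) (Fin n) ℝ → ℝ) := by
  have h : (s1 : Matrix (Fin m) (Fin n) ℝ → ℝ) =
      fun A => sInf ((fun w => (A *ᵥ w) ⬝ᵥ (A *ᵥ w)) '' {w | w ⬝ᵥ w = 1}) :=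
    funext fun A => (isLeast_s1 A).csInf_eq.symm
  rw [h]
  exact isCompact_setOf_dotProduct_self_eq_one.continuous_sInf
    ((continuous_fst.matrix_mulVec continuous_snd).dotProduct
      (continuous_fst.matrix_mulVec continuous_snd))

theorem measurable_s1_dmat {Ω : Type*} [MeasurableSpace Ω] {γ : Fin n → Ω → ℝ}
    (hγ : ∀ j, Measurable (γ j)) : Measurable fun x : Fin m → Ω => s1 (dmat γ x) :=
  (continuous_s1.comp (continuous_id (X := Fin m → Fin n → ℝ))).measurable.comp
    (measurable_pi_lambda _ fun i => measurable_pi_lambda _ fun j =>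
      (hγ j).comp (measurable_pi_apply i))

theorem enorm2_inv_mul_transpose_mulVec_le {A : Matrix (Fin m) (Fin n) ℝ}
    (hA : IsUnit (Aᵀ * A).det) (v : Fin m → ℝ) :
    enorm2 (((Aᵀ * A)⁻¹ * Aᵀ) *ᵥ v) ≤ √(s1 A)⁻¹ * enorm2 v := by
  have h := (s1_mul_dotProduct_self_le A _).trans
    (A.dotProduct_self_mulVec_inv_mul_transpose_mulVec_le hA v)
  rw [enorm2_eq_sqrt_dotProduct, enorm2_eq_sqrt_dotProduct,
    ← Real.sqrt_mul (inv_nonneg.mpr (s1_nonneg A))]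
  exact Real.sqrt_le_sqrt (by rwa [inv_mul_eq_div, le_div_iff₀' (s1_pos hA)])

end SmallestEigenvalue

section LeastSquares

variable {Ω : Type*} {n m : ℕ} {γ : Fin n → Ω → ℝ} {x : Fin m → Ω}

theorem betaFn_sub_eq_Rmat_mulVec_resid (f : Ω → ℝ) (a : Fin n → ℝ)
    (hx : IsUnit ((dmat γ x)ᵀ * dmat γ x).det) :
    betaFn γ f x - a = Rmat γ x *ᵥ fun i => resid γ f a (x i) := by
  have hresid : (fun i => resid γ f a (x i)) = (fun i => f (x i)) - dmat γ x *ᵥ a := by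
    ext i
    simp [resid, dmat, mulVec, dotProduct, mul_comm]
  rw [hresid, mulVec_sub, mulVec_mulVec, Rmat, Matrix.mul_assoc, nonsing_inv_mul _ hx,
    one_mulVec, betaFn, Rmat]

theorem enorm2_betaFn_sub_le [Nonempty (Fin n)] (f : Ω → ℝ) (a : Fin n → ℝ)
    (hx : IsUnit ((dmat γ x)ᵀ * dmat γ x).det) :
    enorm2 (betaFn γ f x - a) ≤ √(s1 (dmat γ x))⁻¹ * ∑ i, |resid γ f a (x i)| := by
  rw [betaFn_sub_eq_Rmat_mulVec_resid f a hx]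
  exact (enorm2_inv_mul_transpose_mulVec_le hx _).trans
    (mul_le_mul_of_nonneg_left (enorm2_le_sum_abs _) (Real.sqrt_nonneg _))

end LeastSquares

theorem eLpNorm_sqrt_eq {α : Type*} [MeasurableSpace α] {μ : Measure α} {h : α → ℝ}
    (hh : ∀ x, 0 ≤ h x) (q : ℝ≥0∞) :
    eLpNorm (fun x => √(h x)) q μ = eLpNorm h (q / 2) μ ^ (1 / 2 : ℝ) := by
  have hsqrt : (fun x => √(h x)) = fun x => ‖h x‖ ^ (1 / 2 : ℝ) := by
    ext x
    rw [Real.norm_of_nonneg (hh x), Real.sqrt_eq_rpow]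
  rw [hsqrt, eLpNorm_norm_rpow h (by norm_num), ENNReal.ofReal_div_of_pos two_pos,
    ENNReal.ofReal_one, ENNReal.ofReal_ofNat, mul_one_div]

theorem lintegral_sum_enorm_mul_comp_eval_le {ι Ω : Type*} [Fintype ι] [MeasurableSpace Ω]
    (μ : Measure Ω) [IsProbabilityMeasure μ] {p q : ℝ≥0∞} [HolderTriple q p 1]
    {g : (ι → Ω) → ℝ} {h : Ω → ℝ} (hg : AEStronglyMeasurable g (Measure.pi fun _ => μ))
    (hh : AEStronglyMeasurable h μ) :
    ∫⁻ x, ∑ i, ‖g x * h (x i)‖ₑ ∂(Measure.pi fun _ => μ)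
      ≤ Fintype.card ι * (eLpNorm g q (Measure.pi fun _ => μ) * eLpNorm h p μ) := by
  have hhi : ∀ i, AEStronglyMeasurable (fun x : ι → Ω => h (x i)) (Measure.pi fun _ => μ) :=
    fun i => hh.comp_measurePreserving (measurePreserving_eval (fun _ => μ) i)
  rw [lintegral_finsetSum' (f := fun i x => ‖g x * h (x i)‖ₑ) _
    fun i _ => (hg.mul (hhi i)).enorm]
  calc ∑ i, ∫⁻ x, ‖g x * h (x i)‖ₑ ∂(Measure.pi fun _ => μ)
      = ∑ i, eLpNorm (g • fun x : ι → Ω => h (x i)) 1 (Measure.pi fun _ => μ) := by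
        simp only [eLpNorm_one_eq_lintegral_enorm, smul_eq_mul, Pi.mul_apply]
    _ ≤ ∑ _i : ι, eLpNorm g q (Measure.pi fun _ => μ) * eLpNorm h p μ := by
        refine Finset.sum_le_sum fun i _ =>
          (eLpNorm_smul_le_mul_eLpNorm (p := q) (q := p) (hhi i) hg).trans_eq ?_
        rw [← eLpNorm_comp_measurePreserving hh (measurePreserving_eval (fun _ => μ) i)]
        rfl
    _ = Fintype.card ι * (eLpNorm g q (Measure.pi fun _ => μ) * eLpNorm h p μ) := by
        rw [Finset.sum_const, Finset.card_univ, nsmul_eq_mul]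

theorem stmt2_general {Ω : Type*} [MeasurableSpace Ω] (μ : Measure Ω) [IsProbabilityMeasure μ]
    (n m : ℕ) (hn : 1 ≤ n)
    (γ : Fin n → Ω → ℝ) (hγ : ∀ j, Measurable (γ j))
    (f : Ω → ℝ)
    (hinv : ∀ᵐ x ∂(Measure.pi fun _ : Fin m => μ), IsUnit ((dmat γ x)ᵀ * dmat γ x).det)
    (a : Fin n → ℝ)
    (p q : ℝ≥0∞) (hpq : 1 / p + 1 / q = 1)
    (hρ : MemLp (resid γ f a) p μ) :
    ∫⁻ x, ENNReal.ofReal (enorm2 (betaFn γ f x - a)) ∂(Measure.pi fun _ : Fin m => μ)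
      ≤ ENNReal.ofReal (Real.sqrt n) * m *
        (eLpNorm (fun x : Fin m → Ω => (s1 (dmat γ x))⁻¹) (q / 2)
          (Measure.pi fun _ : Fin m => μ)) ^ (1 / 2 : ℝ) *
        eLpNorm (resid γ f a) p μ := by
  have : Nonempty (Fin n) := ⟨⟨0, hn⟩⟩
  have : HolderTriple q p 1 := ⟨by simpa [one_div, add_comm] using hpq⟩
  have hg : AEStronglyMeasurable (fun x : Fin m → Ω => √(s1 (dmat γ x))⁻¹)
      (Measure.pi fun _ => μ) :=
    (measurable_s1_dmat hγ).inv.sqrt.aestronglyMeasurable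
  have hsqrt_n : 1 ≤ ENNReal.ofReal √n := by
    simpa using ENNReal.ofReal_le_ofReal (Real.one_le_sqrt.mpr (Nat.one_le_cast.mpr hn))
  calc ∫⁻ x, ENNReal.ofReal (enorm2 (betaFn γ f x - a)) ∂(Measure.pi fun _ : Fin m => μ)
      ≤ ∫⁻ x, ∑ i, ‖√(s1 (dmat γ x))⁻¹ * resid γ f a (x i)‖ₑ ∂(Measure.pi fun _ => μ) := by
        refine lintegral_mono_ae (hinv.mono fun x hx => ?_)
        refine (ENNReal.ofReal_le_ofReal (enorm2_betaFn_sub_le f a hx)).trans_eq ?_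
        rw [Finset.mul_sum, ENNReal.ofReal_sum_of_nonneg fun i _ => by positivity]
        simp only [← ofReal_norm, norm_mul, Real.norm_eq_abs, abs_of_nonneg (Real.sqrt_nonneg _)]
    _ ≤ m * (eLpNorm (fun x : Fin m → Ω => √(s1 (dmat γ x))⁻¹) q (Measure.pi fun _ => μ) *
          eLpNorm (resid γ f a) p μ) := by
        simpa using lintegral_sum_enorm_mul_comp_eval_le μ hg hρ.1
    _ ≤ ENNReal.ofReal √n * m *
          (eLpNorm (fun x : Fin m → Ω => (s1 (dmat γ x))⁻¹) (q / 2)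
            (Measure.pi fun _ => μ)) ^ (1 / 2 : ℝ) * eLpNorm (resid γ f a) p μ := by
        rw [eLpNorm_sqrt_eq fun x => inv_nonneg.mpr (s1_nonneg _), ← mul_assoc]
        gcongr ?_ * _ * _
        exact le_mul_of_one_le_left' hsqrt_n

/-- Proposition 1, consistency: for `a ∈ ℝⁿ`, `1/p + 1/q = 1`, if the
residue `ρ(a) ∈ L^p(Ω,μ)` and `K_q(Γ) < ∞`, then
`E‖β - a‖₂ ≤ √n ⬝ m ⬝ √(K_q(Γ)) ⬝ ‖ρ(a)‖_{L^p(Ω)}`. -/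
theorem stmt2 {Ω : Type*} [MeasurableSpace Ω] (μ : Measure Ω) [IsProbabilityMeasure μ]
    (n m : ℕ) (hn : 1 ≤ n) (hm : 1 ≤ m)
    (γ : Fin n → Ω → ℝ) (hγ : ∀ j, Measurable (γ j))
    (f : Ω → ℝ) (hf : Measurable f)
    (hinv : ∀ᵐ x ∂(Measure.pi fun _ : Fin m => μ), IsUnit ((dmat γ x)ᵀ * dmat γ x).det)
    (a : Fin n → ℝ)
    (p q : ℝ≥0∞) (hp : 1 ≤ p) (hq : 1 ≤ q) (hpq : 1 / p + 1 / q = 1)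
    (hρ : MemLp (resid γ f a) p μ)
    (hK : eLpNorm (fun x : Fin m → Ω => (s1 (dmat γ x))⁻¹) (q / 2)
        (Measure.pi fun _ : Fin m => μ) < ⊤) :
    ∫⁻ x, ENNReal.ofReal (enorm2 (betaFn γ f x - a)) ∂(Measure.pi fun _ : Fin m => μ)
      ≤ ENNReal.ofReal (Real.sqrt n) * m *
        (eLpNorm (fun x : Fin m → Ω => (s1 (dmat γ x))⁻¹) (q / 2)
          (Measure.pi fun _ : Fin m => μ)) ^ (1 / 2 : ℝ) *
        eLpNorm (resid γ f a) p μ :=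
  stmt2_general μ n m hn γ hγ f hinv a p q hpq hρ
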